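/- arXiv:1312.1124 — 3 statements merged into one kernel-verified Lean document; each statement's English description precedes it below -/
import Mathlib

section
/- For every integer p ≥ 2 and N ≥ 1, the sum ∑_{j∈ℤ} ( ∫_{2^j}^{2^{j+1}} e^{−2Nt/(p−1)} dt )^{(p−1)/(2p−1)} is bounded above by C (2p−1)^{(p−1)/(2p−1)} for an absolute constant C independent of p. -/
/-!
With `a = 2N/(p-1)` and `x_j = a 2^j`, the `j`-th integral is at most
`2^j e^{-a 2^j} = a⁻¹ x_j e^{-x_j} ≤ a⁻¹ min(x_j, x_j⁻¹)`. Since `x_j` runs through a dyadic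
sequence, `min(x_j, x_j⁻¹) ≤ 2 · 2^{-|j - j₀|}` for a suitable `j₀`, so after raising to the power
`q = (p-1)/(2p-1) ≥ 1/3` the sum is dominated by a two-sided geometric series independent of `a`.
Finally `a⁻¹ = (p-1)/(2N) ≤ 2p-1`.
-/

open MeasureTheory Filter Metric Complex
open scoped ENNReal Topology NNReal ComplexConjugate

noncomputable section

/-- `ℝ^{2N}`. -/
abbrev Esp (N : ℕ) := EuclideanSpace ℝ (Fin (2*N))

/-- the unit sphere `S^{2N-1}`. -/
abbrev sphereM (N : ℕ) := Metric.sphere (0 : Esp N) 1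

/-- surface measure on the unit sphere. -/
def sphMeas (N : ℕ) : Measure (sphereM N) := (volume : Measure (Esp N)).toSphere

/-- measure on `ℝ₊ × S^{2N-1}`. -/
def muP (N : ℕ) : Measure (ℝ × sphereM N) :=
  ((volume : Measure ℝ).restrict (Set.Ioi 0)).prod (sphMeas N)

/-- Fourier transform `û(ξ) = ∫ e^{-ix·ξ} u(x) dx`. -/
def fint {N : ℕ} (u : Esp N → ℂ) (ξ : Esp N) : ℂ :=
  ∫ x : Esp N, Complex.exp (-Complex.I * ((inner ℝ x ξ : ℝ) : ℂ)) * u x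

/-- inverse Fourier transform `(2π)^{-2N} ∫ e^{ix·ξ} F(ξ) dξ`. -/
def invFint (N : ℕ) (F : Esp N → ℂ) (x : Esp N) : ℂ :=
  ((((2*Real.pi)^(2*N))⁻¹ : ℝ) : ℂ) *
    ∫ ξ : Esp N, Complex.exp (Complex.I * ((inner ℝ x ξ : ℝ) : ℂ)) * F ξ

/-- squared nonhomogeneous Sobolev `H^N` norm `∫ (1+|ξ|²)^N |û(ξ)|² dξ`. -/
def sobNormSq (N : ℕ) (u : Esp N → ℂ) : ℝ :=
  ∫ ξ : Esp N, (1 + ‖ξ‖^2)^N * ‖fint u ξ‖^2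

/-- `ω_{2N-1} = 2π^N/(N-1)!`, the surface measure of `S^{2N-1}`. -/
def omegaS (N : ℕ) : ℝ := 2 * Real.pi ^ N / (N-1).factorial

/-- `β_N = 2N π^{2N} 2^{2N} / ω_{2N-1}`. -/
def betaN (N : ℕ) : ℝ := 2 * N * Real.pi ^ (2*N) * 2 ^ (2*N) / omegaS N

/-- `C_N = (2π)^{-N} ω_{2N-1}^{-1/2}`. -/
def CN (N : ℕ) : ℝ := ((2*Real.pi)^N)⁻¹ * (Real.sqrt (omegaS N))⁻¹

/-- `C̃_N = ω_{2N-1}^{1/2} (2π)^{-N}`. -/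
def CtN (N : ℕ) : ℝ := Real.sqrt (omegaS N) * ((2*Real.pi)^N)⁻¹

/-- Luxemburg norm of the Orlicz space associated to `φ(s) = e^{s²}-1`. -/
def orliczNorm {d : ℕ} (u : EuclideanSpace ℝ (Fin d) → ℂ) : ℝ :=
  sInf {l : ℝ | 0 < l ∧
    (∫⁻ x, ENNReal.ofReal (Real.exp ((‖u x‖ / l)^2) - 1)) ≤ 1}

/-- the `𝓑` norm: `sup_j (∫_S ∫_{2^j}^{2^{j+1}} |w(t,ω)|² dt dω)^{1/2}`. -/
def Bnorm (N : ℕ) (w : ℝ → Esp N → ℂ) : ℝ :=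
  ⨆ j : ℤ, Real.sqrt (∫ ω : sphereM N,
    (∫ t in Set.Icc ((2:ℝ)^j) ((2:ℝ)^(j+1)), ‖w t (ω : Esp N)‖^2) ∂(sphMeas N))

/-- the modulation `e^{i x · e^{a t} ω}`. -/
def modPhase (N : ℕ) (x : Esp N) (a t : ℝ) (ω : sphereM N) : ℂ :=
  Complex.exp (Complex.I * ((inner ℝ x (Real.exp (a * t) • (ω : Esp N)) : ℝ) : ℂ))

/-- the set `𝒫(r_n)` of weak `L²` limits of modulated subsequences. -/
def weakLimSet (N : ℕ) (α : ℕ → ℝ) (r : ℕ → ℝ → Esp N → ℂ) :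
    Set (ℝ × sphereM N → ℂ) :=
  {H | MemLp H 2 (muP N) ∧ ∃ (x : ℕ → Esp N) (σ : ℕ → ℕ), StrictMono σ ∧
    ∀ g : ℝ × sphereM N → ℂ, MemLp g 2 (muP N) →
      Tendsto (fun k => ∫ p, modPhase N (x k) (α (σ k)) p.1 p.2 *
          r (σ k) p.1 (p.2 : Esp N) * conj (g p) ∂(muP N))
        atTop (𝓝 (∫ p, H p * conj (g p) ∂(muP N)))}

/-- `η(r_n) = sup_{H ∈ 𝒫(r_n)} ‖H‖²_{L²}`. -/
def etaFn (N : ℕ) (α : ℕ → ℝ) (r : ℕ → ℝ → Esp N → ℂ) : ℝ :=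
  sSup {c | ∃ H ∈ weakLimSet N α r, c = (eLpNorm H 2 (muP N)).toReal ^ 2}

lemma mul_exp_neg_le_min_inv {x : ℝ} (hx : 0 ≤ x) : x * Real.exp (-x) ≤ min x x⁻¹ := by
  refine le_min (mul_le_of_le_one_right hx (Real.exp_le_one_iff.2 (by linarith))) ?_
  rcases hx.eq_or_lt with rfl | hx
  · simp
  have hhalf : x ≤ Real.exp (x / 2) := by
    nlinarith [Real.quadratic_le_exp_of_nonneg (by linarith : 0 ≤ x / 2)]
  have hsq : x ^ 2 ≤ Real.exp x := by
    calc x ^ 2 ≤ Real.exp (x / 2) ^ 2 := pow_le_pow_left₀ hx.le hhalf 2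
      _ = Real.exp x := by rw [← Real.exp_nat_mul]; ring_nf
  rw [Real.exp_neg, le_inv_comm₀ (by positivity) hx, mul_inv, inv_inv]
  calc x = x⁻¹ * x ^ 2 := by field_simp
    _ ≤ x⁻¹ * Real.exp x := by gcongr

lemma min_inv_le_of_mem_Ico_zpow {x : ℝ} {m : ℤ} (hx : x ∈ Set.Ico ((2 : ℝ) ^ m) (2 ^ (m + 1))) :
    min x x⁻¹ ≤ 2 * (1 / 2 : ℝ) ^ m.natAbs := by
  have hx0 : 0 < x := lt_of_lt_of_le (zpow_pos two_pos m) hx.1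
  rcases lt_or_ge m 0 with hm | hm
  · have : (2 : ℝ) ^ (m + 1) = 2 * (1 / 2 : ℝ) ^ m.natAbs := by
      rw [zpow_add_one₀ two_ne_zero, one_div, inv_pow, ← zpow_natCast, ← zpow_neg,
        Int.ofNat_natAbs_of_nonpos hm.le, neg_neg, mul_comm]
    exact (min_le_left _ _).trans (this ▸ hx.2.le)
  · have : ((2 : ℝ) ^ m)⁻¹ = (1 / 2 : ℝ) ^ m.natAbs := by
      rw [one_div, inv_pow, ← zpow_natCast, Int.natAbs_of_nonneg hm]
    refine (min_le_right _ _).trans ?_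
    rw [← this]
    calc x⁻¹ ≤ ((2 : ℝ) ^ m)⁻¹ := inv_anti₀ (zpow_pos two_pos m) hx.1
      _ ≤ 2 * ((2 : ℝ) ^ m)⁻¹ := le_mul_of_one_le_left (by positivity) one_le_two

lemma summable_half_pow_natAbs_rpow {s : ℝ} (hs : 0 < s) :
    Summable fun m : ℤ => ((1 / 2 : ℝ) ^ m.natAbs) ^ s := by
  have hgeom : Summable fun k : ℕ => ((1 / 2 : ℝ) ^ k) ^ s := by
    simp_rw [← Real.rpow_pow_comm (by norm_num : (0 : ℝ) ≤ 1 / 2)]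
    exact summable_geometric_of_lt_one (by positivity)
      (Real.rpow_lt_one (by norm_num) (by norm_num) hs)
  rw [summable_int_iff_summable_nat_and_neg]
  simpa only [Int.natAbs_neg, Int.natAbs_natCast] using And.intro hgeom hgeom

lemma tsum_le_of_le_min_inv_dyadic {φ : ℤ → ℝ} {y s K : ℝ} (hy : 0 < y) (hs : 0 < s)
    (hK : 0 ≤ K) (hφ0 : ∀ j, 0 ≤ φ j)
    (hφ : ∀ j, φ j ≤ K * min (y * 2 ^ j) (y * 2 ^ j)⁻¹ ^ s) :
    ∑' j, φ j ≤ K * (2 ^ s * ∑' m : ℤ, ((1 / 2 : ℝ) ^ m.natAbs) ^ s) := by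
  obtain ⟨n, hn⟩ := exists_mem_Ico_zpow hy one_lt_two
  set g : ℤ → ℝ := fun m => K * (2 ^ s * ((1 / 2 : ℝ) ^ m.natAbs) ^ s)
  have hg : Summable g := ((summable_half_pow_natAbs_rpow hs).mul_left _).mul_left _
  have hφg : ∀ j, φ j ≤ g (n + j) := by
    intro j
    have hmem : y * 2 ^ j ∈ Set.Ico ((2 : ℝ) ^ (n + j)) (2 ^ (n + j + 1)) := by
      rw [add_right_comm, zpow_add₀ two_ne_zero, zpow_add₀ two_ne_zero]
      exact ⟨mul_le_mul_of_nonneg_right hn.1 (by positivity),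
        mul_lt_mul_of_pos_right hn.2 (by positivity)⟩
    have hpos : 0 < min (y * 2 ^ j) (y * 2 ^ j)⁻¹ := lt_min (by positivity) (by positivity)
    refine (hφ j).trans (mul_le_mul_of_nonneg_left ?_ hK)
    rw [← Real.mul_rpow zero_le_two (by positivity)]
    exact Real.rpow_le_rpow hpos.le (min_inv_le_of_mem_Ico_zpow hmem) hs.le
  have hshift : Summable fun j => g (n + j) := (Equiv.addLeft n).summable_iff.2 hg
  calc ∑' j, φ j ≤ ∑' j, g (n + j) :=
        Summable.tsum_le_tsum hφg (.of_nonneg_of_le hφ0 hφg hshift) hshift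
    _ = ∑' m, g m := (Equiv.addLeft n).tsum_eq g
    _ = K * (2 ^ s * ∑' m : ℤ, ((1 / 2 : ℝ) ^ m.natAbs) ^ s) := by
        rw [tsum_mul_left, tsum_mul_left]

lemma integral_Icc_exp_neg_mul_le {a u v : ℝ} (ha : 0 ≤ a) (huv : u ≤ v) :
    ∫ t in Set.Icc u v, Real.exp (-(a * t)) ≤ (v - u) * Real.exp (-(a * u)) := by
  have hbound : ∀ t ∈ Set.Icc u v, ‖Real.exp (-(a * t))‖ ≤ Real.exp (-(a * u)) := by
    intro t ht
    rw [Real.norm_of_nonneg (Real.exp_pos _).le, Real.exp_le_exp]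
    nlinarith [ht.1]
  calc ∫ t in Set.Icc u v, Real.exp (-(a * t))
      ≤ ‖∫ t in Set.Icc u v, Real.exp (-(a * t))‖ := Real.le_norm_self _
    _ ≤ Real.exp (-(a * u)) * volume.real (Set.Icc u v) :=
        norm_setIntegral_le_of_norm_le_const measure_Icc_lt_top hbound
    _ = (v - u) * Real.exp (-(a * u)) := by
        rw [Real.volume_real_Icc_of_le huv, mul_comm]

lemma integral_dyadic_exp_neg_mul_le {a : ℝ} (ha : 0 < a) (j : ℤ) :
    ∫ t in Set.Icc ((2 : ℝ) ^ j) (2 ^ (j + 1)), Real.exp (-(a * t)) ≤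
      a⁻¹ * min (a * 2 ^ j) (a * 2 ^ j)⁻¹ := by
  have hle : (2 : ℝ) ^ j ≤ 2 ^ (j + 1) := zpow_le_zpow_right₀ one_le_two (by omega)
  calc ∫ t in Set.Icc ((2 : ℝ) ^ j) (2 ^ (j + 1)), Real.exp (-(a * t))
      ≤ (2 ^ (j + 1) - 2 ^ j) * Real.exp (-(a * 2 ^ j)) := integral_Icc_exp_neg_mul_le ha.le hle
    _ = a⁻¹ * (a * 2 ^ j * Real.exp (-(a * 2 ^ j))) := by
        rw [zpow_add_one₀ two_ne_zero]; field_simp; ring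
    _ ≤ a⁻¹ * min (a * 2 ^ j) (a * 2 ^ j)⁻¹ := by
        gcongr; exact mul_exp_neg_le_min_inv (by positivity)

lemma min_self_inv_le_one (x : ℝ) : min x x⁻¹ ≤ 1 := by
  rcases le_total x 1 with h | h
  · exact (min_le_left _ _).trans h
  · exact (min_le_right _ _).trans (inv_le_one_of_one_le₀ h)

lemma rpow_integral_dyadic_exp_neg_mul_le {a s q : ℝ} (ha : 0 < a) (hq : 0 ≤ q) (hsq : s ≤ q)
    (j : ℤ) :
    (∫ t in Set.Icc ((2 : ℝ) ^ j) (2 ^ (j + 1)), Real.exp (-(a * t))) ^ q ≤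
      a⁻¹ ^ q * min (a * 2 ^ j) (a * 2 ^ j)⁻¹ ^ s := by
  have hx : 0 < a * 2 ^ j := by positivity
  have hmin : 0 < min (a * 2 ^ j) (a * 2 ^ j)⁻¹ := lt_min hx (inv_pos.2 hx)
  calc _ ≤ (a⁻¹ * min (a * 2 ^ j) (a * 2 ^ j)⁻¹) ^ q :=
        Real.rpow_le_rpow (integral_nonneg fun _ => (Real.exp_pos _).le)
          (integral_dyadic_exp_neg_mul_le ha j) hq
    _ = a⁻¹ ^ q * min (a * 2 ^ j) (a * 2 ^ j)⁻¹ ^ q := Real.mul_rpow (by positivity) hmin.le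
    _ ≤ _ := mul_le_mul_of_nonneg_left
        (Real.rpow_le_rpow_of_exponent_ge hmin (min_self_inv_le_one _) hsq) (by positivity)

/-- Dyadic summation estimate:
`∑_{j∈ℤ} (∫_{2^j}^{2^{j+1}} e^{-2Nt/(p-1)} dt)^{(p-1)/(2p-1)} ≤ C (2p-1)^{(p-1)/(2p-1)}`. -/
theorem stmt4 :
    ∃ C : ℝ, 0 < C ∧ ∀ N p : ℕ, 1 ≤ N → 2 ≤ p →
      (∑' j : ℤ, (∫ t in Set.Icc ((2:ℝ)^j) ((2:ℝ)^(j+1)),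
          Real.exp (-(2*(N:ℝ)*t)/((p:ℝ)-1))) ^ (((p:ℝ)-1)/(2*(p:ℝ)-1)))
        ≤ C * (2*(p:ℝ)-1) ^ (((p:ℝ)-1)/(2*(p:ℝ)-1)) := by
  set S : ℝ := ∑' m : ℤ, ((1 / 2 : ℝ) ^ m.natAbs) ^ (1 / 3 : ℝ)
  have hS : 0 < S := (summable_half_pow_natAbs_rpow (by norm_num)).tsum_pos
    (fun _ => by positivity) 0 (by norm_num)
  refine ⟨2 ^ (1 / 3 : ℝ) * S, mul_pos (by positivity) hS, fun N p hN hp => ?_⟩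
  have hp' : (2 : ℝ) ≤ p := by exact_mod_cast hp
  have hN' : (1 : ℝ) ≤ N := by exact_mod_cast hN
  set q : ℝ := ((p : ℝ) - 1) / (2 * (p : ℝ) - 1)
  have hq : 1 / 3 ≤ q := by rw [le_div_iff₀ (by linarith)]; linarith
  set a : ℝ := 2 * (N : ℝ) / ((p : ℝ) - 1)
  have ha : 0 < a := div_pos (by positivity) (by linarith)
  have hexponent : ∀ t : ℝ, -(2 * (N : ℝ) * t) / ((p : ℝ) - 1) = -(a * t) := fun t => by ring
  simp_rw [hexponent]
  have hinv : a⁻¹ ≤ 2 * (p : ℝ) - 1 := by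
    rw [inv_div, div_le_iff₀ (by positivity)]; nlinarith
  calc _ ≤ a⁻¹ ^ q * (2 ^ (1 / 3 : ℝ) * S) :=
        tsum_le_of_le_min_inv_dyadic ha (by norm_num) (by positivity)
          (fun _ => Real.rpow_nonneg (integral_nonneg fun _ => (Real.exp_pos _).le) _)
          (fun j => rpow_integral_dyadic_exp_neg_mul_le ha (by linarith) hq j)
    _ ≤ (2 * (p : ℝ) - 1) ^ q * (2 ^ (1 / 3 : ℝ) * S) := by gcongr
    _ = _ := mul_comm _ _
end
end

section
/- Let (a_n), (b_n) ⊂ ℝ^{2N} with −log|a_n − b_n|/α_n → a ∈ ℝ as n → ∞, where α_n → ∞. Then for every g ∈ C_c^∞((a,∞) × S^{2N−1}), the oscillatory integral J_n = ∫_a^∞ ∫_{S^{2N−1}} e^{i(a_n − b_n)·e^{α_n t} ω} g(t,ω) dt dω tends to 0 as n → ∞. -/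
open MeasureTheory Filter Metric Complex
open scoped ENNReal Topology NNReal ComplexConjugate

noncomputable section

open scoped Pointwise

private lemma abs_coord_le_norm {N : ℕ} (x : Esp N) (i : Fin (2*N)) : |x i| ≤ ‖x‖ := by
  rw [EuclideanSpace.norm_eq x]
  have h1 : |x i| = Real.sqrt ((x i)^2) := (Real.sqrt_sq_eq_abs _).symm
  rw [h1]
  apply Real.sqrt_le_sqrt
  calc (x i)^2 = ‖x i‖^2 := by rw [Real.norm_eq_abs, _root_.sq_abs]
    _ ≤ ∑ j, ‖x j‖^2 := Finset.single_le_sum (f := fun j => ‖x j‖^2)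
          (fun j _ => sq_nonneg _) (Finset.mem_univ i)

lemma slab_bound (N : ℕ) (hN : 1 ≤ N) (u : Esp N) (hu : ‖u‖ = 1) (δ : ℝ) (hδ : 0 < δ) :
    sphMeas N {ω : sphereM N | |(inner ℝ u (ω : Esp N) : ℝ)| ≤ δ} ≤
      ENNReal.ofReal ((2*N) * 2^(2*N) * δ) := by
  classical
  set i₀ : Fin (2*N) := ⟨0, by omega⟩ with hi₀
  set e₀ : Esp N := EuclideanSpace.single i₀ 1 with he₀def
  have he₀ : ‖e₀‖ = 1 := by simp [he₀def, EuclideanSpace.norm_single]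
  set f : Esp N ≃ₗᵢ[ℝ] Esp N := Submodule.reflection (ℝ ∙ (e₀ - u))ᗮ with hfdef
  have hfe : f e₀ = u := Submodule.reflection_sub (by rw [he₀, hu])
  have hff : ∀ z : Esp N, f (f z) = z := fun z => Submodule.reflection_reflection _ z
  have hinner : ∀ z : Esp N, (inner ℝ e₀ (f z) : ℝ) = (inner ℝ u z : ℝ) := by
    intro z
    have := f.inner_map_map (𝕜 := ℝ) e₀ (f z)
    rw [hfe, hff] at this
    exact this.symm
  have hcont : Continuous fun x : Esp N => |(inner ℝ u x : ℝ)| :=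
    (continuous_const.inner continuous_id).abs
  have hs : MeasurableSet {ω : sphereM N | |(inner ℝ u (ω : Esp N) : ℝ)| ≤ δ} :=
    (isClosed_le (hcont.comp continuous_subtype_val) continuous_const).measurableSet
  rw [sphMeas, Measure.toSphere_apply' _ hs]
  set A : Set (Esp N) := {x | ‖x‖ ≤ 1 ∧ |(inner ℝ e₀ x : ℝ)| ≤ δ} with hA
  have hAeq : A = {x : Esp N | ‖x‖ ≤ 1} ∩ {x : Esp N | |(inner ℝ e₀ x : ℝ)| ≤ δ} := rfl
  have hAm : MeasurableSet A := by
    rw [hAeq]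
    exact ((isClosed_le continuous_norm continuous_const).inter
      (isClosed_le ((continuous_const.inner continuous_id :
        Continuous fun x : Esp N => (inner ℝ e₀ x : ℝ)).abs) continuous_const)).measurableSet
  have hsub : Set.Ioo (0:ℝ) 1 • ((↑) '' {ω : sphereM N | |(inner ℝ u (ω : Esp N) : ℝ)| ≤ δ})
      ⊆ f ⁻¹' A := by
    rintro x ⟨r, hr, y, ⟨ω, hω, rfl⟩, rfl⟩
    constructor
    · rw [f.norm_map, norm_smul, Real.norm_eq_abs,
        abs_of_pos hr.1, mem_sphere_zero_iff_norm.mp ω.2, mul_one]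
      exact hr.2.le
    · rw [hinner, real_inner_smul_right, abs_mul, abs_of_pos hr.1]
      calc r * |(inner ℝ u (ω : Esp N) : ℝ)| ≤ 1 * δ := by
            apply mul_le_mul hr.2.le hω (abs_nonneg _) zero_le_one
        _ = δ := one_mul δ
  have hpre : volume (f ⁻¹' A) = volume A :=
    f.measurePreserving.measure_preimage hAm.nullMeasurableSet
  set e := (MeasurableEquiv.toLp 2 (Fin (2*N) → ℝ)).symm with hedef
  set B : Set (Fin (2*N) → ℝ) := Set.pi Set.univ
    (fun i => if i = i₀ then Set.Icc (-δ) δ else Set.Icc (-1) 1) with hB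
  have hBm : MeasurableSet B := MeasurableSet.univ_pi (fun i => by
    split <;> exact measurableSet_Icc)
  have hAB : A ⊆ e ⁻¹' B := by
    intro x hx
    intro i _
    have hcoord : e x i = x i := rfl
    show e x i ∈ (if i = i₀ then Set.Icc (-δ) δ else Set.Icc (-1) 1)
    rw [hcoord]
    by_cases hii : i = i₀
    · rw [if_pos hii]
      have hxi : (inner ℝ e₀ x : ℝ) = x i₀ := by
        simp [he₀def, EuclideanSpace.inner_single_left]
      have h2 := hx.2
      rw [hxi] at h2
      have hxe : x i = x i₀ := by rw [hii]
      rw [hxe]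
      constructor
      · linarith [abs_le.mp h2]
      · linarith [abs_le.mp h2]
    · rw [if_neg hii]
      have := (abs_coord_le_norm x i).trans hx.1
      constructor
      · linarith [abs_le.mp this]
      · linarith [abs_le.mp this]
  have hvolB : volume B = ENNReal.ofReal (2*δ) * ENNReal.ofReal 2 ^ (2*N-1) := by
    rw [hB, volume_pi_pi]
    rw [← Finset.mul_prod_erase Finset.univ _ (Finset.mem_univ i₀)]
    have h1 : volume (if i₀ = i₀ then Set.Icc (-δ) δ else Set.Icc (-1) 1)
        = ENNReal.ofReal (2*δ) := by
      rw [if_pos rfl, Real.volume_Icc]; congr 1; ring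
    have h2 : ∀ i ∈ Finset.univ.erase i₀,
        volume (if i = i₀ then Set.Icc (-δ) δ else Set.Icc (-1) 1)
          = ENNReal.ofReal 2 := by
      intro i hi
      rw [if_neg (Finset.ne_of_mem_erase hi), Real.volume_Icc]
      congr 1; ring
    rw [h1, Finset.prod_congr rfl h2, Finset.prod_const, Finset.card_erase_of_mem
      (Finset.mem_univ i₀), Finset.card_univ, Fintype.card_fin]
  have hvole : volume (e ⁻¹' B) = volume B :=
    (EuclideanSpace.volume_preserving_symm_measurableEquiv_toLp _).measure_preimage
      hBm.nullMeasurableSet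
  have hmono : volume (Set.Ioo (0:ℝ) 1 • (Subtype.val ''
      {ω : sphereM N | |(inner ℝ u (ω : Esp N) : ℝ)| ≤ δ})) ≤
      ENNReal.ofReal (2*δ) * ENNReal.ofReal 2 ^ (2*N-1) := by
    calc volume _ ≤ volume (f ⁻¹' A) := measure_mono hsub
      _ = volume A := hpre
      _ ≤ volume (e ⁻¹' B) := measure_mono hAB
      _ = volume B := hvole
      _ = _ := hvolB
  have hdim : Module.finrank ℝ (Esp N) = 2*N := finrank_euclideanSpace_fin
  rw [hdim]
  refine le_trans (mul_le_mul_right hmono _) ?_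
  have hcast : ((2*N : ℕ) : ℝ≥0∞) = ENNReal.ofReal ((2*N : ℕ) : ℝ) := by
    rw [ENNReal.ofReal_natCast]
  rw [hcast, ← ENNReal.ofReal_pow (by norm_num : (0:ℝ) ≤ 2),
    ← ENNReal.ofReal_mul (by positivity), ← ENNReal.ofReal_mul (by positivity)]
  apply ENNReal.ofReal_le_ofReal
  push_cast
  have h2 : (2:ℝ)^(2*N-1) * 2 = 2^(2*N) := by
    rw [← pow_succ]
    congr 1
    omega
  have h3 : 2*(N:ℝ)*(2*δ*2^(2*N-1)) = 2*N*2^(2*N)*δ := by rw [← h2]; ring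
  linarith

private lemma ibp_bound (α c : ℝ) (hα : 1 ≤ α) (hc : c ≠ 0) (h h' : ℝ → ℂ) (a₂ b₂ M : ℝ)
    (hab : a₂ ≤ b₂) (hM : 0 ≤ M)
    (hd : ∀ t, HasDerivAt h (h' t) t)
    (hbound : ∀ t ∈ Set.Icc a₂ b₂, ‖h t‖ ≤ M ∧ ‖h' t‖ ≤ M)
    (hz2 : h a₂ = 0) (hz3 : h b₂ = 0) (hcont : Continuous h') :
    ‖∫ t in a₂..b₂, Complex.exp (Complex.I * ((Real.exp (α*t) * c : ℝ) : ℂ)) * h t‖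
      ≤ 2*M*(b₂-a₂)*Real.exp (-(α*a₂))/|c| := by
  have hα0 : (0:ℝ) < α := lt_of_lt_of_le one_pos hα
  have hcC : (c:ℂ) ≠ 0 := Complex.ofReal_ne_zero.mpr hc
  have hαC : (α:ℂ) ≠ 0 := Complex.ofReal_ne_zero.mpr hα0.ne'
  set k : ℂ := (Complex.I * c * α)⁻¹ with hk
  have hIca : Complex.I * c * α ≠ 0 :=
    mul_ne_zero (mul_ne_zero Complex.I_ne_zero hcC) hαC
  have hkk : (Complex.I * c * α) * k = 1 := mul_inv_cancel₀ hIca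
  set E : ℝ → ℂ := fun t => Complex.exp (Complex.I * ((Real.exp (α*t) * c : ℝ) : ℂ)) with hEdef
  set r : ℝ → ℂ := fun t => ((Real.exp (-(α*t)) : ℝ) : ℂ) with hrdef
  have hcontE : Continuous E := by
    apply Complex.continuous_exp.comp
    apply continuous_const.mul
    exact Complex.continuous_ofReal.comp
      ((Real.continuous_exp.comp (continuous_const.mul continuous_id)).mul continuous_const)
  have hconth : Continuous h := by
    have : Differentiable ℝ h := fun t => (hd t).differentiableAt
    exact this.continuous
  have hcontr : Continuous r :=
    Complex.continuous_ofReal.comp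
      (Real.continuous_exp.comp (continuous_const.mul continuous_id).neg)
  have hE : ∀ t, HasDerivAt E (E t * (Complex.I * ((Real.exp (α*t) * α * c : ℝ) : ℂ))) t := by
    intro t
    have h1 : HasDerivAt (fun s : ℝ => α * s) α t := by
      simpa using (hasDerivAt_id t).const_mul α
    have h2 : HasDerivAt (fun s : ℝ => Real.exp (α*s)) (Real.exp (α*t) * α) t := h1.exp
    have h3 : HasDerivAt (fun s : ℝ => Real.exp (α*s) * c) (Real.exp (α*t) * α * c) t :=
      h2.mul_const c
    exact ((h3.ofReal_comp).const_mul Complex.I).cexp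
  have hr : ∀ t, HasDerivAt r (((Real.exp (-(α*t)) * -α : ℝ) : ℂ)) t := by
    intro t
    have h1 : HasDerivAt (fun s : ℝ => -(α * s)) (-α) t := by
      have h0 : HasDerivAt (fun s : ℝ => α * s) α t := by
        simpa using (hasDerivAt_id t).const_mul α
      exact h0.neg
    exact (h1.exp).ofReal_comp
  set Φ : ℝ → ℂ := fun t => E t * ((h' t - α * h t) * (r t * k)) with hΦdef
  set F : ℝ → ℂ := fun t => E t * (h t * (r t * k)) with hFdef
  have hF : ∀ t, HasDerivAt F (E t * h t + Φ t) t := by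
    intro t
    have hh : HasDerivAt F _ t := (hE t).mul ((hd t).mul ((hr t).mul_const k))
    convert hh using 1
    have hAB : Complex.exp ((α:ℂ)*(t:ℂ)) * Complex.exp (-((α:ℂ)*(t:ℂ))) = 1 := by
      rw [← Complex.exp_add]
      simp
    show E t * h t + E t * ((h' t - (α:ℂ) * h t) * (((Real.exp (-(α*t)) : ℝ) : ℂ) * k)) = _
    simp only [hrdef, Pi.mul_apply]
    push_cast
    linear_combination (-(E t * h t)) * hkk +
      (-(E t * h t * Complex.I * c * α * k)) * hAB
  have hcontΦ : Continuous Φ :=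
    hcontE.mul (((hcont.sub (continuous_const.mul hconth)).mul
      (hcontr.mul continuous_const)))
  have hcontEh : Continuous (fun t => E t * h t) := hcontE.mul hconth
  have hFTC : ∫ t in a₂..b₂, (E t * h t + Φ t) = F b₂ - F a₂ :=
    intervalIntegral.integral_eq_sub_of_hasDerivAt (fun t _ => hF t)
      ((hcontEh.add hcontΦ).intervalIntegrable _ _)
  have hF0 : F b₂ - F a₂ = 0 := by
    simp [hFdef, hz2, hz3]
  have hsplit : ∫ t in a₂..b₂, (E t * h t + Φ t)
      = (∫ t in a₂..b₂, E t * h t) + ∫ t in a₂..b₂, Φ t :=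
    intervalIntegral.integral_add (hcontEh.intervalIntegrable _ _)
      (hcontΦ.intervalIntegrable _ _)
  have hEh : (∫ t in a₂..b₂, E t * h t) = - ∫ t in a₂..b₂, Φ t := by
    have h0 : (∫ t in a₂..b₂, E t * h t) + (∫ t in a₂..b₂, Φ t) = 0 := by
      rw [← hsplit, hFTC, hF0]
    exact eq_neg_of_add_eq_zero_left h0
  set C : ℝ := 2*M*Real.exp (-(α*a₂))/|c| with hC
  have hcpos : (0:ℝ) < |c| := abs_pos.mpr hc
  have hΦb : ∀ t ∈ Set.uIoc a₂ b₂, ‖Φ t‖ ≤ C := by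
    intro t ht
    rw [Set.uIoc_of_le hab] at ht
    have hta : a₂ ≤ t := ht.1.le
    have hnE : ‖E t‖ = 1 := by
      rw [hEdef]
      show ‖Complex.exp (Complex.I * ((Real.exp (α*t) * c : ℝ) : ℂ))‖ = 1
      rw [mul_comm]
      exact Complex.norm_exp_ofReal_mul_I _
    have hnr : ‖r t‖ = Real.exp (-(α*t)) := by
      rw [hrdef]
      simp only [Complex.norm_real, Real.norm_eq_abs, Real.abs_exp]
    have hnk : ‖k‖ = (|c| * α)⁻¹ := by
      have hnICA : ‖Complex.I * (c:ℂ) * (α:ℂ)‖ = |c| * α := by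
        rw [norm_mul, norm_mul, Complex.norm_I, one_mul, Complex.norm_real,
          Complex.norm_real, Real.norm_eq_abs, Real.norm_eq_abs, abs_of_pos hα0]
      rw [hk, norm_inv, hnICA]
    have hnh : ‖h' t - (α:ℂ) * h t‖ ≤ M + α*M := by
      refine (norm_sub_le _ _).trans ?_
      have h1 := (hbound t ⟨hta, ht.2⟩).1
      have h2 := (hbound t ⟨hta, ht.2⟩).2
      have h3 : ‖(α:ℂ) * h t‖ = α * ‖h t‖ := by
        rw [norm_mul, Complex.norm_real, Real.norm_eq_abs, abs_of_pos hα0]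
      rw [h3]
      have h4 : α * ‖h t‖ ≤ α * M := mul_le_mul_of_nonneg_left h1 hα0.le
      linarith
    have hnΦ : ‖Φ t‖ ≤ (M + α*M) * (Real.exp (-(α*t)) * (|c| * α)⁻¹) := by
      rw [hΦdef]
      simp only [norm_mul]
      rw [hnE, hnr, hnk, one_mul]
      apply mul_le_mul_of_nonneg_right hnh
      positivity
    refine hnΦ.trans ?_
    have het : Real.exp (-(α*t)) ≤ Real.exp (-(α*a₂)) := by
      apply Real.exp_le_exp.mpr
      nlinarith
    have h1 : (M + α*M)/α ≤ 2*M := by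
      rw [div_le_iff₀ hα0]
      nlinarith
    calc (M + α*M) * (Real.exp (-(α*t)) * (|c| * α)⁻¹)
        = ((M+α*M)/α) * Real.exp (-(α*t)) * |c|⁻¹ := by
          rw [div_eq_mul_inv, mul_inv]
          ring
      _ ≤ (2*M) * Real.exp (-(α*a₂)) * |c|⁻¹ := by
          gcongr
      _ = C := by rw [hC, div_eq_mul_inv]
  have hnorm := intervalIntegral.norm_integral_le_of_norm_le_const hΦb
  rw [hEh, norm_neg]
  refine hnorm.trans ?_
  rw [_root_.abs_of_nonneg (sub_nonneg.mpr hab), hC]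
  exact le_of_eq (by ring)

set_option maxHeartbeats 1000000 in
/-- Decay of the oscillatory integral
`J_n = ∫_a^∞ ∫_S e^{i(a_n-b_n)·e^{α_n t}ω} g(t,ω) dt dω → 0` when
`-log|a_n-b_n|/α_n → a` and `g` is smooth with compact `t`-support in `(a,∞)`. -/
theorem stmt10 (N : ℕ) (hN : 1 ≤ N) (α : ℕ → ℝ) (hα0 : ∀ n, 0 < α n)
    (hα : Tendsto α atTop atTop) (x y : ℕ → Esp N) (hne : ∀ n, x n ≠ y n)
    (a : ℝ) (ha : Tendsto (fun n => -Real.log ‖x n - y n‖ / α n) atTop (𝓝 a))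
    (g : ℝ → Esp N → ℂ)
    (hg : ContDiff ℝ (⊤ : ℕ∞) (fun p : ℝ × Esp N => g p.1 p.2))
    (hsupp : ∃ a₁ b₁ : ℝ, a < a₁ ∧ a₁ < b₁ ∧
      ∀ t : ℝ, t ∉ Set.Icc a₁ b₁ → ∀ ω : Esp N, g t ω = 0) :
    Tendsto (fun n => ∫ t in Set.Ioi a, ∫ ω : sphereM N,
        Complex.exp (Complex.I *
          ((inner ℝ (x n - y n) (Real.exp (α n * t) • (ω : Esp N)) : ℝ) : ℂ)) *
          g t (ω : Esp N) ∂(sphMeas N))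
      atTop (𝓝 0) := by
  classical
  haveI : IsFiniteMeasure (sphMeas N) :=
    inferInstanceAs (IsFiniteMeasure (volume : Measure (Esp N)).toSphere)
  obtain ⟨a₁, b₁, ha₁, hab₁, hsupp0⟩ := hsupp
  set v : ℕ → Esp N := fun n => x n - y n with hvdef
  have hv0 : ∀ n, v n ≠ 0 := fun n => sub_ne_zero.mpr (hne n)
  have hvpos : ∀ n, 0 < ‖v n‖ := fun n => norm_pos_iff.mpr (hv0 n)
  set a₂ : ℝ := (a + a₁)/2 with ha₂def
  set b₂ : ℝ := b₁ + 1 with hb₂def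
  have haa₂ : a < a₂ := by rw [ha₂def]; linarith
  have ha₂a₁ : a₂ < a₁ := by rw [ha₂def]; linarith
  have hb₁b₂ : b₁ < b₂ := by rw [hb₂def]; linarith
  have ha₂b₂ : a₂ < b₂ := by linarith
  have hIccsub : Set.Icc a₁ b₁ ⊆ Set.Icc a₂ b₂ :=
    Set.Icc_subset_Icc ha₂a₁.le hb₁b₂.le
  -- derivative in t
  set G : ℝ × Esp N → ℂ := fun p => g p.1 p.2 with hGdef
  set gt : ℝ → Esp N → ℂ := fun t w => (fderiv ℝ G (t, w)) (1, 0) with hgtdef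
  have hGd : Differentiable ℝ G := hg.differentiable (by simp)
  have hderiv : ∀ (w : Esp N) (t : ℝ), HasDerivAt (fun s => g s w) (gt t w) t := by
    intro w t
    have h1 : HasDerivAt (fun s : ℝ => (s, w)) ((1:ℝ), (0:Esp N)) t :=
      HasDerivAt.prodMk (hasDerivAt_id t) (hasDerivAt_const t w)
    exact ((hGd (t, w)).hasFDerivAt.comp_hasDerivAt t h1)
  have hgtcont : Continuous (fun p : ℝ × Esp N => gt p.1 p.2) := by
    have h1 : Continuous (fderiv ℝ G) := hg.continuous_fderiv (by simp)
    have h2 : Continuous (fun p : ℝ × Esp N => (fderiv ℝ G p) (1, 0)) :=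
      h1.clm_apply continuous_const
    simpa [hgtdef] using h2
  -- uniform bound
  set i₀ : Fin (2*N) := ⟨0, by omega⟩ with hi₀
  set pt : Esp N := EuclideanSpace.single i₀ 1 with hptdef
  have hpt : pt ∈ sphere (0 : Esp N) 1 := by
    simp [hptdef, mem_sphere_zero_iff_norm, EuclideanSpace.norm_single]
  set K : Set (ℝ × Esp N) := (Set.Icc a₂ b₂) ×ˢ (sphere (0:Esp N) 1) with hKdef
  have hKc : IsCompact K := isCompact_Icc.prod (isCompact_sphere 0 1)
  have hKne : K.Nonempty := ⟨(a₂, pt), ⟨⟨le_rfl, ha₂b₂.le⟩, hpt⟩⟩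
  set q : ℝ × Esp N → ℝ := fun p => ‖G p‖ + ‖gt p.1 p.2‖ with hqdef
  have hqc : Continuous q := (hg.continuous.norm).add hgtcont.norm
  obtain ⟨p₀, hp₀K, hp₀'⟩ := hKc.exists_isMaxOn hKne hqc.continuousOn
  have hp₀ : ∀ p ∈ K, q p ≤ q p₀ := hp₀'
  set M : ℝ := max (q p₀) 1 with hMdef
  have hM1 : (1:ℝ) ≤ M := le_max_right _ _
  have hM0 : (0:ℝ) ≤ M := zero_le_one.trans hM1
  have hgb : ∀ t ∈ Set.Icc a₂ b₂, ∀ ω : sphereM N,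
      ‖g t (ω : Esp N)‖ ≤ M ∧ ‖gt t (ω : Esp N)‖ ≤ M := by
    intro t ht ω
    have hmem : (t, (ω : Esp N)) ∈ K := ⟨ht, ω.2⟩
    have := hp₀ _ hmem
    have h01 : ‖g t (ω : Esp N)‖ + ‖gt t (ω : Esp N)‖ ≤ q p₀ := this
    constructor
    · refine le_trans ?_ (le_trans h01 (le_max_left _ _))
      nlinarith [norm_nonneg (gt t (ω : Esp N))]
    · refine le_trans ?_ (le_trans h01 (le_max_left _ _))
      nlinarith [norm_nonneg (g t (ω : Esp N))]
  have hgM : ∀ (t : ℝ) (ω : sphereM N), ‖g t (ω : Esp N)‖ ≤ M := by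
    intro t ω
    by_cases ht : t ∈ Set.Icc a₂ b₂
    · exact (hgb t ht ω).1
    · have : t ∉ Set.Icc a₁ b₁ := fun h => ht (hIccsub h)
      rw [hsupp0 t this]
      simpa using hM0
  -- constants
  set C0 : ℝ := M * (b₂ - a₂) with hC0def
  set C1 : ℝ := 2*M*(b₂ - a₂) with hC1def
  set C2 : ℝ := 2*(N:ℝ) * 2^(2*N) with hC2def
  set S : ℝ := (sphMeas N Set.univ).toReal with hSdef
  set ε' : ℝ := (a₂ - a)/2 with hε'def
  have hε'pos : 0 < ε' := by rw [hε'def]; linarith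
  set Ks : ℕ → ℝ := fun n => C1 * Real.exp (-(α n * a₂)) / ‖v n‖ with hKsdef
  set δs : ℕ → ℝ := fun n => Real.sqrt (Ks n) with hδsdef
  set u : ℕ → Esp N := fun n => ‖v n‖⁻¹ • v n with hudef
  have hu1 : ∀ n, ‖u n‖ = 1 := fun n => norm_smul_inv_norm (hv0 n)
  have hC1pos : 0 < C1 := by rw [hC1def]; nlinarith
  have hC0nn : 0 ≤ C0 := by rw [hC0def]; nlinarith
  have hC2nn : 0 ≤ C2 := by rw [hC2def]; positivity
  have hSnn : 0 ≤ S := ENNReal.toReal_nonneg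
  have hKpos : ∀ n, 0 < Ks n :=
    fun n => div_pos (mul_pos hC1pos (Real.exp_pos _)) (hvpos n)
  have hδpos : ∀ n, 0 < δs n := fun n => Real.sqrt_pos.mpr (hKpos n)
  -- the inner ℝ integral
  set In : ℕ → sphereM N → ℂ := fun n ω => ∫ t in a₂..b₂,
    Complex.exp (Complex.I *
      ((inner ℝ (v n) (Real.exp (α n * t) • (ω : Esp N)) : ℝ) : ℂ)) * g t (ω : Esp N)
    with hIndef
  -- rewriting of J n
  have hJeq : ∀ n, (∫ t in Set.Ioi a, ∫ ω : sphereM N,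
      Complex.exp (Complex.I *
        ((inner ℝ (x n - y n) (Real.exp (α n * t) • (ω : Esp N)) : ℝ) : ℂ)) *
        g t (ω : Esp N) ∂(sphMeas N))
      = ∫ ω : sphereM N, In n ω ∂(sphMeas N) := by
    intro n
    set F2 : ℝ → sphereM N → ℂ := fun t ω =>
      Complex.exp (Complex.I *
        ((inner ℝ (v n) (Real.exp (α n * t) • (ω : Esp N)) : ℝ) : ℂ)) * g t (ω : Esp N)
      with hF2def
    have hnormF2 : ∀ (t : ℝ) (ω : sphereM N), ‖F2 t ω‖ = ‖g t (ω : Esp N)‖ := by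
      intro t ω
      rw [hF2def]
      simp only [norm_mul]
      rw [mul_comm Complex.I, Complex.norm_exp_ofReal_mul_I, one_mul]
    have hF2cont : Continuous (fun p : ℝ × sphereM N => F2 p.1 p.2) := by
      apply Continuous.mul
      · apply Complex.continuous_exp.comp
        apply Continuous.mul continuous_const
        apply Complex.continuous_ofReal.comp
        apply Continuous.inner continuous_const
        exact (Real.continuous_exp.comp (continuous_const.mul continuous_fst)).smul
          (continuous_subtype_val.comp continuous_snd)
      · exact hg.continuous.comp
          (continuous_fst.prodMk (continuous_subtype_val.comp continuous_snd))
    have hzero : ∀ t ∉ Set.Icc a₁ b₁, (∫ ω : sphereM N, F2 t ω ∂(sphMeas N)) = 0 := by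
      intro t ht
      have : ∀ ω : sphereM N, F2 t ω = 0 := by
        intro ω
        rw [hF2def]
        simp [hsupp0 t ht]
      simp [this]
    have e1 : (∫ t in Set.Ioi a, ∫ ω : sphereM N, F2 t ω ∂(sphMeas N))
        = ∫ t, ∫ ω : sphereM N, F2 t ω ∂(sphMeas N) := by
      apply setIntegral_eq_integral_of_forall_compl_eq_zero
      intro t ht
      apply hzero
      intro hmem
      exact ht (lt_of_lt_of_le ha₁ hmem.1)
    have e2 : (∫ t, ∫ ω : sphereM N, F2 t ω ∂(sphMeas N))
        = ∫ t in Set.Icc a₂ b₂, ∫ ω : sphereM N, F2 t ω ∂(sphMeas N) := by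
      symm
      apply setIntegral_eq_integral_of_forall_compl_eq_zero
      intro t ht
      exact hzero t (fun hmem => ht (hIccsub hmem))
    have hint : Integrable (Function.uncurry F2)
        ((volume.restrict (Set.Icc a₂ b₂)).prod (sphMeas N)) := by
      apply Integrable.mono' (integrable_const M)
      · exact (hF2cont.aestronglyMeasurable)
      · apply ae_of_all
        rintro ⟨t, ω⟩
        rw [Function.uncurry]
        rw [hnormF2]
        exact hgM t ω
    have e3 : (∫ t in Set.Icc a₂ b₂, ∫ ω : sphereM N, F2 t ω ∂(sphMeas N))
        = ∫ ω : sphereM N, (∫ t in Set.Icc a₂ b₂, F2 t ω) ∂(sphMeas N) :=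
      integral_integral_swap hint
    have e4 : ∀ ω : sphereM N, (∫ t in Set.Icc a₂ b₂, F2 t ω) = In n ω := by
      intro ω
      rw [hIndef]
      rw [MeasureTheory.integral_Icc_eq_integral_Ioc,
        ← intervalIntegral.integral_of_le ha₂b₂.le]
    calc (∫ t in Set.Ioi a, ∫ ω : sphereM N, F2 t ω ∂(sphMeas N))
        = ∫ t, ∫ ω : sphereM N, F2 t ω ∂(sphMeas N) := e1
      _ = ∫ t in Set.Icc a₂ b₂, ∫ ω : sphereM N, F2 t ω ∂(sphMeas N) := e2
      _ = ∫ ω : sphereM N, (∫ t in Set.Icc a₂ b₂, F2 t ω) ∂(sphMeas N) := e3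
      _ = ∫ ω : sphereM N, In n ω ∂(sphMeas N) := by
          apply integral_congr_ae
          apply ae_of_all
          exact e4
  -- trivial bound
  have htriv : ∀ n (ω : sphereM N), ‖In n ω‖ ≤ C0 := by
    intro n ω
    rw [hIndef]
    have hb : ∀ t ∈ Set.uIoc a₂ b₂, ‖Complex.exp (Complex.I *
        ((inner ℝ (v n) (Real.exp (α n * t) • (ω : Esp N)) : ℝ) : ℂ)) * g t (ω : Esp N)‖
        ≤ M := by
      intro t ht
      rw [norm_mul, mul_comm Complex.I, Complex.norm_exp_ofReal_mul_I, one_mul]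
      exact hgM t ω
    have := intervalIntegral.norm_integral_le_of_norm_le_const hb
    rwa [_root_.abs_of_nonneg (sub_nonneg.mpr ha₂b₂.le)] at this
  -- oscillatory bound
  have hibp : ∀ n (ω : sphereM N), 1 ≤ α n → (inner ℝ (v n) (ω : Esp N) : ℝ) ≠ 0 →
      ‖In n ω‖ ≤ C1 * Real.exp (-(α n * a₂)) / |(inner ℝ (v n) (ω : Esp N) : ℝ)| := by
    intro n ω hαn hc
    set c : ℝ := (inner ℝ (v n) (ω : Esp N) : ℝ) with hcdef
    have heq : In n ω = ∫ t in a₂..b₂,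
        Complex.exp (Complex.I * ((Real.exp (α n * t) * c : ℝ) : ℂ)) * g t (ω : Esp N) := by
      rw [hIndef]
      apply intervalIntegral.integral_congr
      intro t _
      simp only [real_inner_smul_right, hcdef]
    rw [heq]
    have hz2 : g a₂ (ω : Esp N) = 0 := by
      apply hsupp0
      intro hmem
      exact absurd hmem.1 (not_le.mpr ha₂a₁)
    have hz3 : g b₂ (ω : Esp N) = 0 := by
      apply hsupp0
      intro hmem
      exact absurd hmem.2 (not_le.mpr hb₁b₂)
    have hcont' : Continuous (fun t => gt t (ω : Esp N)) :=
      hgtcont.comp (continuous_id.prodMk continuous_const)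
    have := ibp_bound (α n) c hαn hc (fun t => g t (ω : Esp N))
      (fun t => gt t (ω : Esp N)) a₂ b₂ M ha₂b₂.le hM0
      (fun t => hderiv (ω : Esp N) t)
      (fun t ht => hgb t ht ω) hz2 hz3 hcont'
    calc ‖∫ t in a₂..b₂,
        Complex.exp (Complex.I * ((Real.exp (α n * t) * c : ℝ) : ℂ)) * g t (ω : Esp N)‖
        ≤ 2*M*(b₂-a₂)*Real.exp (-(α n * a₂))/|c| := this
      _ = C1 * Real.exp (-(α n * a₂)) / |c| := by rw [hC1def]
  -- slab sets
  set slab : ℕ → Set (sphereM N) := fun n =>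
    {ω : sphereM N | |(inner ℝ (u n) (ω : Esp N) : ℝ)| ≤ δs n} with hslabdef
  have hslabm : ∀ n, MeasurableSet (slab n) := by
    intro n
    apply IsClosed.measurableSet
    apply isClosed_le _ continuous_const
    exact ((continuous_const.inner continuous_id).abs).comp continuous_subtype_val
  have hslabsmall : ∀ n, (sphMeas N (slab n)).toReal ≤ C2 * δs n := by
    intro n
    apply ENNReal.toReal_le_of_le_ofReal (by positivity)
    refine le_trans (slab_bound N hN (u n) (hu1 n) (δs n) (hδpos n)) ?_
    apply ENNReal.ofReal_le_ofReal
    exact le_of_eq (by rw [hC2def]; try ring)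
  -- dominating function on the sphere
  set fB : ℕ → sphereM N → ℝ := fun n ω =>
    if |(inner ℝ (u n) (ω : Esp N) : ℝ)| ≤ δs n then C0 else Ks n / δs n with hfBdef
  have hKδnn : ∀ n, 0 ≤ Ks n / δs n := fun n => le_of_lt (div_pos (hKpos n) (hδpos n))
  have hfBint : ∀ n, Integrable (fB n) (sphMeas N) := by
    intro n
    apply Integrable.mono' (integrable_const (max C0 (Ks n / δs n)))
    · apply (Measurable.ite (hslabm n) measurable_const measurable_const).aestronglyMeasurable
    · apply ae_of_all
      intro ω
      simp only [hfBdef]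
      by_cases hcase : |(inner ℝ (u n) (ω : Esp N) : ℝ)| ≤ δs n
      · rw [if_pos hcase, Real.norm_eq_abs, _root_.abs_of_nonneg hC0nn]
        exact le_max_left _ _
      · rw [if_neg hcase, Real.norm_eq_abs, _root_.abs_of_nonneg (hKδnn n)]
        exact le_max_right _ _
  -- pointwise domination
  have hpt2 : ∀ n, 1 ≤ α n → ∀ ω : sphereM N, ‖In n ω‖ ≤ fB n ω := by
    intro n hαn ω
    simp only [hfBdef]
    by_cases hcase : |(inner ℝ (u n) (ω : Esp N) : ℝ)| ≤ δs n
    · rw [if_pos hcase]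
      exact htriv n ω
    · rw [if_neg hcase]
      push_neg at hcase
      have hinner_eq : (inner ℝ (u n) (ω : Esp N) : ℝ) = ‖v n‖⁻¹ * (inner ℝ (v n) (ω : Esp N) : ℝ) := by
        rw [hudef]
        simp only [real_inner_smul_left]
      have habs : |(inner ℝ (u n) (ω : Esp N) : ℝ)|
          = ‖v n‖⁻¹ * |(inner ℝ (v n) (ω : Esp N) : ℝ)| := by
        rw [hinner_eq, abs_mul, abs_of_pos (inv_pos.mpr (hvpos n))]
      have hlow : ‖v n‖ * δs n < |(inner ℝ (v n) (ω : Esp N) : ℝ)| := by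
        have h1 : ‖v n‖ * (δs n) < ‖v n‖ * |(inner ℝ (u n) (ω : Esp N) : ℝ)| :=
          mul_lt_mul_of_pos_left hcase (hvpos n)
        rw [habs, ← mul_assoc, mul_inv_cancel₀ (hvpos n).ne', one_mul] at h1
        exact h1
      have hcne : (inner ℝ (v n) (ω : Esp N) : ℝ) ≠ 0 := by
        intro h0
        rw [h0, abs_zero] at hlow
        nlinarith [mul_pos (hvpos n) (hδpos n)]
      refine (hibp n ω hαn hcne).trans ?_
      have hnum : 0 ≤ C1 * Real.exp (-(α n * a₂)) := by positivity
      calc C1 * Real.exp (-(α n * a₂)) / |(inner ℝ (v n) (ω : Esp N) : ℝ)|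
          ≤ C1 * Real.exp (-(α n * a₂)) / (‖v n‖ * δs n) := by
            apply div_le_div_of_nonneg_left hnum (mul_pos (hvpos n) (hδpos n)) hlow.le
        _ = Ks n / δs n := by
            rw [hKsdef]
            field_simp
  -- integral bound
  have hIb : ∀ n, 1 ≤ α n →
      ‖∫ ω : sphereM N, In n ω ∂(sphMeas N)‖ ≤ (C2*C0 + S) * δs n := by
    intro n hαn
    have step1 : ‖∫ ω : sphereM N, In n ω ∂(sphMeas N)‖
        ≤ ∫ ω : sphereM N, ‖In n ω‖ ∂(sphMeas N) := norm_integral_le_integral_norm _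
    have step2 : (∫ ω : sphereM N, ‖In n ω‖ ∂(sphMeas N))
        ≤ ∫ ω : sphereM N, fB n ω ∂(sphMeas N) := by
      apply integral_mono_of_nonneg
      · exact ae_of_all _ (fun ω => norm_nonneg _)
      · exact hfBint n
      · exact ae_of_all _ (hpt2 n hαn)
    set gB : sphereM N → ℝ := fun ω =>
      (slab n).indicator (fun _ => C0) ω + Ks n / δs n with hgBdef
    have step3 : (∫ ω : sphereM N, fB n ω ∂(sphMeas N))
        ≤ ∫ ω : sphereM N, gB ω ∂(sphMeas N) := by
      apply integral_mono (hfBint n)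
      · exact ((integrable_const C0).indicator (hslabm n)).add (integrable_const _)
      · intro ω
        simp only [hfBdef, hgBdef]
        by_cases hcase : |(inner ℝ (u n) (ω : Esp N) : ℝ)| ≤ δs n
        · rw [if_pos hcase]
          have hmem : ω ∈ slab n := hcase
          have : (slab n).indicator (fun _ => C0) ω = C0 :=
            Set.indicator_of_mem hmem _
          rw [this]
          linarith [hKδnn n]
        · rw [if_neg hcase]
          have hmem : ω ∉ slab n := hcase
          have : (slab n).indicator (fun _ => C0) ω = 0 :=
            Set.indicator_of_notMem hmem _
          rw [this]
          linarith
    have step4 : (∫ ω : sphereM N, gB ω ∂(sphMeas N))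
        = (sphMeas N (slab n)).toReal * C0 + (Ks n / δs n) * S := by
      simp only [hgBdef]
      rw [integral_add ((integrable_const C0).indicator (hslabm n)) (integrable_const _)]
      rw [integral_indicator_const _ (hslabm n), integral_const]
      rw [smul_eq_mul, smul_eq_mul, hSdef]
      simp only [measureReal_def]; ring
    have step5 : (sphMeas N (slab n)).toReal * C0 + (Ks n / δs n) * S
        ≤ (C2 * δs n) * C0 + δs n * S := by
      have h1 : (sphMeas N (slab n)).toReal * C0 ≤ (C2 * δs n) * C0 :=
        mul_le_mul_of_nonneg_right (hslabsmall n) hC0nn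
      have h2 : Ks n / δs n = δs n := by
        rw [hδsdef]
        exact Real.div_sqrt
      rw [h2]
      linarith
    calc ‖∫ ω : sphereM N, In n ω ∂(sphMeas N)‖
        ≤ ∫ ω : sphereM N, ‖In n ω‖ ∂(sphMeas N) := step1
      _ ≤ ∫ ω : sphereM N, fB n ω ∂(sphMeas N) := step2
      _ ≤ ∫ ω : sphereM N, gB ω ∂(sphMeas N) := step3
      _ = (sphMeas N (slab n)).toReal * C0 + (Ks n / δs n) * S := step4
      _ ≤ (C2 * δs n) * C0 + δs n * S := step5
      _ = (C2*C0 + S) * δs n := by ring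
  -- eventual smallness of Ks
  have hev2 : ∀ᶠ n in atTop, Real.exp (-(α n * (a + ε'))) ≤ ‖v n‖ := by
    have hlt : a < a + ε' := by linarith
    filter_upwards [ha.eventually (gt_mem_nhds hlt)] with n hn
    have h1 : -Real.log ‖v n‖ < α n * (a + ε') := by
      rw [div_lt_iff₀ (hα0 n)] at hn
      have hn' : -Real.log ‖v n‖ < (a + ε') * α n := hn
      nlinarith [hn']
    have h2 : -(α n * (a + ε')) < Real.log ‖v n‖ := by linarith
    calc Real.exp (-(α n * (a + ε'))) ≤ Real.exp (Real.log ‖v n‖) :=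
          Real.exp_le_exp.mpr h2.le
      _ = ‖v n‖ := Real.exp_log (hvpos n)
  have hKev : ∀ᶠ n in atTop, Ks n ≤ C1 * Real.exp (-(α n * ε')) := by
    filter_upwards [hev2] with n hn
    rw [hKsdef]
    have hd : 0 < Real.exp (-(α n * (a + ε'))) := Real.exp_pos _
    calc C1 * Real.exp (-(α n * a₂)) / ‖v n‖
        ≤ C1 * Real.exp (-(α n * a₂)) / Real.exp (-(α n * (a + ε'))) := by
          apply div_le_div_of_nonneg_left (by positivity) hd hn
      _ = C1 * Real.exp (-(α n * ε')) := by
          rw [mul_div_assoc, ← Real.exp_sub]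
          congr 2
          rw [hε'def, ha₂def]
          ring
  -- the vanishing majorant
  set W : ℕ → ℝ := fun n => (C2*C0 + S) * Real.sqrt (C1 * Real.exp (-(α n * ε'))) with hWdef
  have hW0 : Tendsto W atTop (𝓝 0) := by
    have h1 : Tendsto (fun n => α n * ε') atTop atTop := hα.atTop_mul_const hε'pos
    have h2 : Tendsto (fun n => -(α n * ε')) atTop atBot :=
      tendsto_neg_atTop_atBot.comp h1
    have h3 : Tendsto (fun n => Real.exp (-(α n * ε'))) atTop (𝓝 0) :=
      Real.tendsto_exp_atBot.comp h2
    have h4 : Tendsto (fun n => C1 * Real.exp (-(α n * ε'))) atTop (𝓝 0) := by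
      have := h3.const_mul C1
      simpa using this
    have h5 : Tendsto (fun n => Real.sqrt (C1 * Real.exp (-(α n * ε')))) atTop (𝓝 0) := by
      have := (Real.continuous_sqrt.tendsto 0).comp h4
      simpa [Function.comp_def] using this
    have h6 := h5.const_mul (C2*C0 + S)
    simpa [hWdef] using h6
  -- conclusion
  apply squeeze_zero_norm' _ hW0
  filter_upwards [hα.eventually_ge_atTop 1, hKev] with n hn1 hn2
  rw [hJeq n]
  refine (hIb n hn1).trans ?_
  rw [hWdef]
  apply mul_le_mul_of_nonneg_left _ (by positivity)
  rw [hδsdef]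
  exact Real.sqrt_le_sqrt hn2
end
end

section
/- Let α_n → ∞ and let (φ_n) be a bounded sequence in L²(ℝ₊ × S^{2N−1}). Suppose η(φ_n) > 0, where η is defined via weak limits of e^{i x_n·e^{α_n t}ω} φ_n(t,ω). Then, after extraction, there exist Φ⁽¹⁾ ∈ L²(ℝ₊ × S^{2N−1}) with ‖Φ⁽¹⁾‖²_{L²} ≥ η(φ_n)/2 and a sequence (x_n⁽¹⁾) ⊂ ℝ^{2N} such that φ_n(t,ω) = e^{−i x_n⁽¹⁾·e^{α_n t}ω} Φ⁽¹⁾(t,ω) + r_n⁽¹⁾(t,ω) with e^{i x_n⁽¹⁾·e^{α_n t}ω} r_n⁽¹⁾(t,ω) ⇀ 0 weakly in L²(ℝ₊ × S^{2N−1}); consequently ‖φ_n‖²_{L²} = ‖Φ⁽¹⁾‖²_{L²} + ‖r_n⁽¹⁾‖²_{L²} + o(1). -/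
open MeasureTheory Filter Metric Complex
open scoped ENNReal Topology NNReal ComplexConjugate

noncomputable section

/-!
Since `η(φ_n) > 0` is a supremum, some weak limit `H ∈ 𝒫(φ_n)`, along cores `x_n` and a
subsequence, has `‖H‖² > η(φ_n)/2`; take `Φ⁽¹⁾ = H`. The phase is unimodular, so the modulated
remainder is `ψ_n - H` with `ψ_n = e^{i x_n·e^{α_n t}ω} φ_n ⇀ H`, which gives the weak
convergence to `0`, and `‖ψ_n - H‖² = ‖ψ_n‖² - 2 Re ⟨ψ_n, H⟩ + ‖H‖²` with
`⟨ψ_n, H⟩ → ‖H‖²` gives the energy decoupling.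

The functions `φ_n` are not assumed measurable. The expansion of `‖ψ_n - H‖²` is therefore
done on `{H ≠ 0}`, where `ψ_n = (ψ_n H̄) / H̄` is a.e. measurable once `ψ_n H̄` is integrable
(which `⟨ψ_n, H⟩ → ‖H‖² ≠ 0` forces eventually), while off `{H ≠ 0}` nothing needs expanding.
-/

section L2Energy

variable {γ : Type*} [MeasurableSpace γ] {ν : Measure γ} {𝕜 : Type*} [RCLike 𝕜]

theorem toReal_eLpNorm_two_sq_add_compl {E : Type*} [NormedAddCommGroup E] (f : γ → E)
    {S : Set γ} (hS : MeasurableSet S) (h₁ : eLpNorm f 2 (ν.restrict S) ≠ ⊤)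
    (h₂ : eLpNorm f 2 (ν.restrict Sᶜ) ≠ ⊤) :
    (eLpNorm f 2 ν).toReal ^ 2 =
      (eLpNorm f 2 (ν.restrict S)).toReal ^ 2 + (eLpNorm f 2 (ν.restrict Sᶜ)).toReal ^ 2 := by
  have key : ∀ μ : Measure γ, eLpNorm f 2 μ ^ 2 = ∫⁻ x, ‖f x‖ₑ ^ (2 : ℝ) ∂μ := fun μ => by
    simpa using eLpNorm_nnreal_pow_eq_lintegral (f := f) (μ := μ) (p := 2) two_ne_zero
  rw [← ENNReal.toReal_pow, key, ← lintegral_add_compl _ hS, ← key, ← key,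
    ENNReal.toReal_add (ENNReal.pow_ne_top h₁) (ENNReal.pow_ne_top h₂),
    ENNReal.toReal_pow, ENNReal.toReal_pow]

theorem toReal_eLpNorm_sub_sq {f g : γ → 𝕜} (hf : MemLp f 2 ν) (hg : MemLp g 2 ν) :
    (eLpNorm (f - g) 2 ν).toReal ^ 2 = (eLpNorm f 2 ν).toReal ^ 2
      - 2 * RCLike.re (∫ x, f x * conj (g x) ∂ν) + (eLpNorm g 2 ν).toReal ^ 2 := by
  have h := norm_sub_sq (𝕜 := 𝕜) (hf.toLp f) (hg.toLp g)
  rw [← MemLp.toLp_sub, Lp.norm_toLp, Lp.norm_toLp, Lp.norm_toLp, ← inner_re_symm,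
    L2.inner_def] at h
  have hi : ∫ x, inner 𝕜 (hg.toLp g x) (hf.toLp f x) ∂ν = ∫ x, f x * conj (g x) ∂ν := by
    refine integral_congr_ae ?_
    filter_upwards [hf.coeFn_toLp, hg.coeFn_toLp] with x hfx hgx
    simp [hfx, hgx]
  rwa [hi] at h

theorem integral_mul_conj_self {f : γ → 𝕜} (hf : MemLp f 2 ν) :
    ∫ x, f x * conj (f x) ∂ν = (((eLpNorm f 2 ν).toReal ^ 2 : ℝ) : 𝕜) := by
  have h := inner_self_eq_norm_sq_to_K (𝕜 := 𝕜) (hf.toLp f)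
  rw [Lp.norm_toLp, L2.inner_def] at h
  refine Eq.trans (integral_congr_ae ?_) (by exact_mod_cast h)
  filter_upwards [hf.coeFn_toLp] with x hfx
  simp [hfx, RCLike.mul_conj]

theorem aestronglyMeasurable_restrict_support_of_mul_conj {ψ H : γ → 𝕜}
    (hH : StronglyMeasurable H) (h : AEStronglyMeasurable (fun x => ψ x * conj (H x)) ν) :
    AEStronglyMeasurable ψ (ν.restrict (Function.support H)) := by
  have hquot : AEStronglyMeasurable (fun x => ψ x * conj (H x) / conj (H x))
      (ν.restrict (Function.support H)) :=
    (h.restrict.aemeasurable.div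
      hH.aestronglyMeasurable.star.aemeasurable).aestronglyMeasurable
  refine hquot.congr ?_
  filter_upwards [ae_restrict_mem hH.measurableSet_support] with x hx
  rw [mul_div_assoc, div_self (by simpa using hx), mul_one]

theorem toReal_eLpNorm_sub_sq_of_integrable_mul_conj {ψ H : γ → 𝕜} (hH : MemLp H 2 ν)
    (hHm : StronglyMeasurable H) (hψ : eLpNorm ψ 2 ν ≠ ⊤)
    (hint : Integrable (fun x => ψ x * conj (H x)) ν) :
    (eLpNorm (ψ - H) 2 ν).toReal ^ 2 = (eLpNorm ψ 2 ν).toReal ^ 2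
      - 2 * RCLike.re (∫ x, ψ x * conj (H x) ∂ν) + (eLpNorm H 2 ν).toReal ^ 2 := by
  set S := Function.support H
  have hS : MeasurableSet S := hHm.measurableSet_support
  have hψS : MemLp ψ 2 (ν.restrict S) :=
    ⟨aestronglyMeasurable_restrict_support_of_mul_conj hHm hint.1,
      (eLpNorm_mono_measure ψ Measure.restrict_le_self).trans_lt hψ.lt_top⟩
  have hHS : MemLp H 2 (ν.restrict S) := hH.restrict S
  have hψSc : eLpNorm ψ 2 (ν.restrict Sᶜ) ≠ ⊤ :=
    ((eLpNorm_mono_measure ψ Measure.restrict_le_self).trans_lt hψ.lt_top).ne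
  have hHSc : H =ᵐ[ν.restrict Sᶜ] 0 := by
    filter_upwards [ae_restrict_mem hS.compl] with x hx
    simpa [S] using hx
  have hsubSc : eLpNorm (ψ - H) 2 (ν.restrict Sᶜ) = eLpNorm ψ 2 (ν.restrict Sᶜ) :=
    eLpNorm_congr_ae (by filter_upwards [hHSc] with x hx; simp [hx])
  have hHSc' : eLpNorm H 2 (ν.restrict Sᶜ) = 0 := by simp [eLpNorm_congr_ae hHSc]
  have hcross : ∫ x in S, ψ x * conj (H x) ∂ν = ∫ x, ψ x * conj (H x) ∂ν :=
    setIntegral_eq_integral_of_forall_compl_eq_zero fun x hx => by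
      simp [Function.notMem_support.mp hx]
  rw [toReal_eLpNorm_two_sq_add_compl (ψ - H) hS (hψS.sub hHS).2.ne (hsubSc ▸ hψSc),
    toReal_eLpNorm_two_sq_add_compl ψ hS hψS.2.ne hψSc,
    toReal_eLpNorm_two_sq_add_compl H hS hHS.2.ne (by simp [hHSc']),
    hsubSc, hHSc', ← hcross, toReal_eLpNorm_sub_sq hψS hHS]
  simp only [ENNReal.toReal_zero]
  ring

theorem tendsto_toReal_eLpNorm_sq_sub_sub {ι : Type*} {l : Filter ι} {ψ : ι → γ → 𝕜}
    {H : γ → 𝕜} (hH : MemLp H 2 ν) (hHm : StronglyMeasurable H)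
    (hψ : ∀ i, eLpNorm (ψ i) 2 ν ≠ ⊤)
    (hconv : Tendsto (fun i => ∫ x, ψ i x * conj (H x) ∂ν) l (𝓝 (∫ x, H x * conj (H x) ∂ν))) :
    Tendsto (fun i => (eLpNorm (ψ i) 2 ν).toReal ^ 2 - (eLpNorm H 2 ν).toReal ^ 2
      - (eLpNorm (ψ i - H) 2 ν).toReal ^ 2) l (𝓝 0) := by
  by_cases hH0 : eLpNorm H 2 ν = 0
  · have hH0' : H =ᵐ[ν] 0 := (eLpNorm_eq_zero_iff hH.1 two_ne_zero).mp hH0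
    refine tendsto_const_nhds.congr fun i => ?_
    have : ψ i - H =ᵐ[ν] ψ i := by filter_upwards [hH0'] with x hx; simp [hx]
    simp [eLpNorm_congr_ae this, hH0]
  set c := (eLpNorm H 2 ν).toReal ^ 2
  rw [integral_mul_conj_self hH] at hconv
  have hc : (c : 𝕜) ≠ 0 := by
    have := ENNReal.toReal_pos hH0 hH.2.ne
    exact_mod_cast (pow_pos this 2).ne'
  have hint : ∀ᶠ i in l, Integrable (fun x => ψ i x * conj (H x)) ν := by
    filter_upwards [hconv.eventually_ne hc] with i hi
    by_contra hni
    exact hi (integral_undef hni)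
  have hlim : Tendsto (fun i => 2 * RCLike.re (∫ x, ψ i x * conj (H x) ∂ν) - 2 * c) l (𝓝 0) := by
    have h := (((RCLike.continuous_re.tendsto _).comp hconv).const_mul 2).sub_const (2 * c)
    rwa [RCLike.ofReal_re, sub_self] at h
  refine hlim.congr' ?_
  filter_upwards [hint] with i hi
  rw [toReal_eLpNorm_sub_sq_of_integrable_mul_conj hH hHm (hψ i) hi]
  ring

theorem norm_integral_sub_le {E : Type*} [NormedAddCommGroup E] [NormedSpace ℝ E]
    {f g : γ → E} (hg : Integrable g ν) :
    ‖∫ x, (f x - g x) ∂ν‖ ≤ ‖(∫ x, f x ∂ν) - ∫ x, g x ∂ν‖ := by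
  by_cases hf : Integrable f ν
  · rw [integral_sub hf hg]
  · have : ¬Integrable (fun x => f x - g x) ν := fun h =>
      hf ((h.add hg).congr (ae_of_all _ fun x => by simp))
    simp [integral_undef this]

end L2Energy
theorem norm_modPhase (N : ℕ) (x : Esp N) (a t : ℝ) (ω : sphereM N) :
    ‖modPhase N x a t ω‖ = 1 :=
  norm_exp_I_mul_ofReal _

theorem mem_weakLimSet_of_ae_eq {N : ℕ} {α : ℕ → ℝ} {r : ℕ → ℝ → Esp N → ℂ}
    {H H' : ℝ × sphereM N → ℂ} (hH : H ∈ weakLimSet N α r) (h : H =ᵐ[muP N] H') :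
    H' ∈ weakLimSet N α r := by
  obtain ⟨hH2, x, σ, hσ, hconv⟩ := hH
  refine ⟨hH2.ae_eq h, x, σ, hσ, fun g hg => ?_⟩
  have hlimit : ∫ p, H p * conj (g p) ∂(muP N) = ∫ p, H' p * conj (g p) ∂(muP N) :=
    integral_congr_ae (h.mono fun p hp => by simp [hp])
  exact hlimit ▸ hconv g hg

theorem exists_stronglyMeasurable_mem_weakLimSet_lt {N : ℕ} {α : ℕ → ℝ}
    {r : ℕ → ℝ → Esp N → ℂ} {c : ℝ} (hc₀ : 0 ≤ c) (hc : c < etaFn N α r) :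
    ∃ H ∈ weakLimSet N α r, StronglyMeasurable H ∧ c < (eLpNorm H 2 (muP N)).toReal ^ 2 := by
  have hne : {c | ∃ H ∈ weakLimSet N α r, c = (eLpNorm H 2 (muP N)).toReal ^ 2}.Nonempty := by
    by_contra h
    rw [Set.not_nonempty_iff_eq_empty] at h
    rw [etaFn, h, Real.sSup_empty] at hc
    linarith
  obtain ⟨_, ⟨H, hH, rfl⟩, hlt⟩ := exists_lt_of_lt_csSup hne hc
  have hHm := hH.1.1
  exact ⟨hHm.mk H, mem_weakLimSet_of_ae_eq hH hHm.ae_eq_mk, hHm.stronglyMeasurable_mk,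
    by rwa [← eLpNorm_congr_ae hHm.ae_eq_mk]⟩

theorem stmt16_general (N : ℕ) (α : ℕ → ℝ) (φn : ℕ → ℝ → Esp N → ℂ)
    (hbd : ∃ M : ℝ≥0∞, M < ⊤ ∧ ∀ n,
      eLpNorm (fun p : ℝ × sphereM N => φn n p.1 (p.2 : Esp N)) 2 (muP N) ≤ M)
    (hη : 0 < etaFn N α φn) :
    ∃ (σ : ℕ → ℕ), StrictMono σ ∧
    ∃ (Φ₁ : ℝ × sphereM N → ℂ) (x₁ : ℕ → Esp N) (r : ℕ → ℝ × sphereM N → ℂ),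
      MemLp Φ₁ 2 (muP N) ∧
      etaFn N α φn / 2 ≤ (eLpNorm Φ₁ 2 (muP N)).toReal ^ 2 ∧
      (∀ n p, r n p = φn (σ n) p.1 (p.2 : Esp N) -
        conj (modPhase N (x₁ n) (α (σ n)) p.1 p.2) * Φ₁ p) ∧
      (∀ g : ℝ × sphereM N → ℂ, MemLp g 2 (muP N) →
        Tendsto (fun n => ∫ p, modPhase N (x₁ n) (α (σ n)) p.1 p.2 * r n p *
            conj (g p) ∂(muP N)) atTop (𝓝 0)) ∧
      Tendsto (fun n =>
        (eLpNorm (fun p : ℝ × sphereM N => φn (σ n) p.1 (p.2 : Esp N)) 2 (muP N)).toReal ^ 2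
          - (eLpNorm Φ₁ 2 (muP N)).toReal ^ 2
          - (eLpNorm (r n) 2 (muP N)).toReal ^ 2) atTop (𝓝 0) := by
  obtain ⟨H, ⟨hH, x, σ, hσ, hconv⟩, hHm, hHη⟩ :=
    exists_stronglyMeasurable_mem_weakLimSet_lt (half_pos hη).le (half_lt_self hη)
  set ψ : ℕ → ℝ × sphereM N → ℂ := fun n p =>
    modPhase N (x n) (α (σ n)) p.1 p.2 * φn (σ n) p.1 p.2
  set r : ℕ → ℝ × sphereM N → ℂ := fun n p =>
    φn (σ n) p.1 p.2 - conj (modPhase N (x n) (α (σ n)) p.1 p.2) * H p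
  have hmod : ∀ n p, modPhase N (x n) (α (σ n)) p.1 p.2 * r n p = ψ n p - H p := fun n p => by
    rw [mul_sub, ← mul_assoc, mul_conj', norm_modPhase]
    simp [ψ]
  refine ⟨σ, hσ, H, x, r, hH, hHη.le, fun _ _ => rfl, fun g hg => ?_, ?_⟩
  · have hHg : Integrable (fun p => H p * conj (g p)) (muP N) := hH.integrable_mul hg.star
    refine squeeze_zero_norm (fun n => ?_) (by
      simpa using (tendsto_sub_nhds_zero_iff.mpr (hconv g hg)).norm)
    simp_rw [hmod, sub_mul]
    exact norm_integral_sub_le hHg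
  · obtain ⟨M, hM, hφM⟩ := hbd
    have hψ : ∀ n, eLpNorm (ψ n) 2 (muP N) =
        eLpNorm (fun p : ℝ × sphereM N => φn (σ n) p.1 p.2) 2 (muP N) := fun n =>
      eLpNorm_congr_norm_ae (ae_of_all _ fun p => by simp [ψ, norm_modPhase])
    have hr : ∀ n, eLpNorm (r n) 2 (muP N) = eLpNorm (ψ n - H) 2 (muP N) := fun n =>
      eLpNorm_congr_norm_ae (ae_of_all _ fun p => by
        rw [Pi.sub_apply, ← hmod, norm_mul, norm_modPhase, one_mul])
    simp_rw [← hψ, hr]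
    exact tendsto_toReal_eLpNorm_sq_sub_sub hH hHm
      (fun n => (hψ n ▸ (hφM (σ n)).trans_lt hM).ne) (hconv H hH)

/-- Extraction of one profile: if `η(φ_n) > 0`, then after extraction
`φ_n = e^{-i x_n·e^{α_n t}ω} Φ⁽¹⁾ + r_n⁽¹⁾` with `‖Φ⁽¹⁾‖² ≥ η(φ_n)/2`, the modulated
remainder converging weakly to `0`, and the energies decoupling. -/
theorem stmt16 (N : ℕ) (hN : 1 ≤ N) (α : ℕ → ℝ) (hα0 : ∀ n, 0 < α n)
    (hα : Tendsto α atTop atTop) (φn : ℕ → ℝ → Esp N → ℂ)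
    (hbd : ∃ M : ℝ≥0∞, M < ⊤ ∧ ∀ n,
      eLpNorm (fun p : ℝ × sphereM N => φn n p.1 (p.2 : Esp N)) 2 (muP N) ≤ M)
    (hη : 0 < etaFn N α φn) :
    ∃ (σ : ℕ → ℕ), StrictMono σ ∧
    ∃ (Φ₁ : ℝ × sphereM N → ℂ) (x₁ : ℕ → Esp N) (r : ℕ → ℝ × sphereM N → ℂ),
      MemLp Φ₁ 2 (muP N) ∧
      etaFn N α φn / 2 ≤ (eLpNorm Φ₁ 2 (muP N)).toReal ^ 2 ∧
      (∀ n p, r n p = φn (σ n) p.1 (p.2 : Esp N) -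
        conj (modPhase N (x₁ n) (α (σ n)) p.1 p.2) * Φ₁ p) ∧
      (∀ g : ℝ × sphereM N → ℂ, MemLp g 2 (muP N) →
        Tendsto (fun n => ∫ p, modPhase N (x₁ n) (α (σ n)) p.1 p.2 * r n p *
            conj (g p) ∂(muP N)) atTop (𝓝 0)) ∧
      Tendsto (fun n =>
        (eLpNorm (fun p : ℝ × sphereM N => φn (σ n) p.1 (p.2 : Esp N)) 2 (muP N)).toReal ^ 2
          - (eLpNorm Φ₁ 2 (muP N)).toReal ^ 2
          - (eLpNorm (r n) 2 (muP N)).toReal ^ 2) atTop (𝓝 0) :=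
  stmt16_general N α φn hbd hη
end
end
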